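/- arXiv:2009.00883 — 6 statements merged into one kernel-verified Lean document; each statement's English description precedes it below -/
import Mathlib

section
/- For all real numbers α ≥ 1 and all r, s ≥ 0, one has (4α/(α+1)²)·(r^((α+1)/2) − s^((α+1)/2))² ≤ (r^α − s^α)(r − s). -/
/-! With `γ = (α - 1) / 2` one has
`∫ t in s..r, t ^ γ = (r ^ ((α + 1) / 2) - s ^ ((α + 1) / 2)) / ((α + 1) / 2)` and
`∫ t in s..r, t ^ (2 * γ) = (r ^ α - s ^ α) / α`, so the inequality is the Cauchy–Schwarz
inequality `(∫ t in s..r, t ^ γ) ^ 2 ≤ (r - s) * ∫ t in s..r, t ^ (2 * γ)`. -/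

open intervalIntegral Set
open MeasureTheory (volume)

theorem sq_intervalIntegral_le_mul_integral_sq {f : ℝ → ℝ} {a b : ℝ}
    (hf : IntervalIntegrable f volume a b)
    (hf2 : IntervalIntegrable (fun t => f t ^ 2) volume a b) :
    (∫ t in a..b, f t) ^ 2 ≤ (b - a) * ∫ t in a..b, f t ^ 2 := by
  wlog hab : a ≤ b generalizing a b
  · have := this hf.symm hf2.symm (le_of_not_ge hab)
    rw [integral_symm a b, integral_symm a b, neg_sq] at this
    linarith
  -- `c ↦ ∫ (f - c)²` is a nonnegative quadratic, so its discriminant is nonpositive.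
  have hquad : ∀ c : ℝ,
      0 ≤ (b - a) * (c * c) + (-2 * ∫ t in a..b, f t) * c + ∫ t in a..b, f t ^ 2 := by
    intro c
    have hexpand : ∫ t in a..b, (f t - c) ^ 2
        = (b - a) * (c * c) + (-2 * ∫ t in a..b, f t) * c + ∫ t in a..b, f t ^ 2 := by
      simp_rw [sub_sq]
      rw [integral_add (hf2.sub ((hf.const_mul 2).mul_const c)) intervalIntegrable_const,
        integral_sub hf2 ((hf.const_mul 2).mul_const c), integral_mul_const, integral_const_mul,
        integral_const, smul_eq_mul]
      ring
    exact hexpand ▸ integral_nonneg hab fun _ _ => sq_nonneg _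
  have := discrim_le_zero hquad
  rw [discrim] at this
  linarith

theorem mul_sq_rpow_sub_rpow_le {α r s : ℝ} (hα : 0 < α) (hr : 0 ≤ r) (hs : 0 ≤ s) :
    (4 * α / (α + 1) ^ 2) * (r ^ ((α + 1) / 2) - s ^ ((α + 1) / 2)) ^ 2
      ≤ (r ^ α - s ^ α) * (r - s) := by
  have hγ : -1 < (α - 1) / 2 := by linarith
  have hsq : EqOn (fun t : ℝ => t ^ (α - 1)) (fun t => (t ^ ((α - 1) / 2)) ^ 2) (uIcc s r) := by
    intro t ht
    have ht0 : 0 ≤ t := le_trans (le_min hs hr) ht.1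
    dsimp only
    rw [← Real.rpow_natCast, ← Real.rpow_mul ht0]
    ring_nf
  have hint : ∫ t in s..r, t ^ ((α - 1) / 2)
      = (r ^ ((α + 1) / 2) - s ^ ((α + 1) / 2)) / ((α + 1) / 2) := by
    rw [integral_rpow (Or.inl hγ)]
    ring_nf
  have hint_sq : ∫ t in s..r, (t ^ ((α - 1) / 2)) ^ 2 = (r ^ α - s ^ α) / α := by
    rw [← integral_congr hsq, integral_rpow (Or.inl (by linarith))]
    ring_nf
  have hcs := sq_intervalIntegral_le_mul_integral_sq (intervalIntegrable_rpow' hγ)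
    ((intervalIntegrable_congr (hsq.mono uIoc_subset_uIcc)).mp
      (intervalIntegrable_rpow' (by linarith)))
  rw [hint, hint_sq] at hcs
  calc (4 * α / (α + 1) ^ 2) * (r ^ ((α + 1) / 2) - s ^ ((α + 1) / 2)) ^ 2
      = α * ((r ^ ((α + 1) / 2) - s ^ ((α + 1) / 2)) / ((α + 1) / 2)) ^ 2 := by
        field_simp
        ring
    _ ≤ α * ((r - s) * ((r ^ α - s ^ α) / α)) := mul_le_mul_of_nonneg_left hcs hα.le
    _ = (r ^ α - s ^ α) * (r - s) := by
        field_simp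

theorem fundamental_ineq_0 (α r s : ℝ) (hα : 1 ≤ α) (hr : 0 ≤ r) (hs : 0 ≤ s) :
    (4 * α / (α + 1) ^ 2) * (r ^ ((α + 1) / 2) - s ^ ((α + 1) / 2)) ^ 2
      ≤ (r ^ α - s ^ α) * (r - s) :=
  mul_sq_rpow_sub_rpow_le (by linarith) hr hs
end

section
/- For all real numbers α ≥ 1 and all r, s ≥ 0, one has |r^α − s^α| ≤ (2α/(α+1))·(max{r,s})^((α−1)/2)·|r^((α+1)/2) − s^((α+1)/2)|. -/
/-!
Put `β = (α + 1) / 2`, `γ = α / β = 2α / (α + 1) ≥ 1` and, for `s ≤ r`, `x = r ^ β`, `y = s ^ β`.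
The inequality becomes `x ^ γ - y ^ γ ≤ γ x ^ (γ - 1) (x - y)`: a secant slope of the convex
function `t ↦ t ^ γ` is at most its derivative at the right endpoint.
-/

open Real Set

lemma rpow_sub_rpow_le_mul_rpow_mul_sub {γ x y : ℝ} (hγ : 1 ≤ γ) (hy : 0 ≤ y) (hyx : y ≤ x) :
    x ^ γ - y ^ γ ≤ γ * x ^ (γ - 1) * (x - y) := by
  rcases hyx.eq_or_lt with rfl | hyx
  · simp
  have hslope : slope (fun t : ℝ ↦ t ^ γ) y x ≤ γ * x ^ (γ - 1) :=
    (convexOn_rpow hγ).slope_le_of_hasDerivAt hy (hy.trans hyx.le) hyx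
      (hasDerivAt_rpow_const (Or.inr hγ))
  rw [slope_def_field, div_le_iff₀ (sub_pos.2 hyx)] at hslope
  exact hslope

lemma rpow_sub_rpow_le_div_mul_rpow_sub_mul_rpow_sub {p q r s : ℝ} (hq : 0 < q) (hqp : q ≤ p)
    (hs : 0 ≤ s) (hsr : s ≤ r) :
    r ^ p - s ^ p ≤ p / q * r ^ (p - q) * (r ^ q - s ^ q) := by
  have hr : 0 ≤ r := hs.trans hsr
  have hpow {t : ℝ} (ht : 0 ≤ t) (e : ℝ) : (t ^ q) ^ (e / q) = t ^ e := by
    rw [← rpow_mul ht, mul_div_cancel₀ _ hq.ne']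
  have key := rpow_sub_rpow_le_mul_rpow_mul_sub ((one_le_div hq).2 hqp) (rpow_nonneg hs q)
    (rpow_le_rpow hs hsr hq.le)
  rwa [hpow hr, hpow hs, show p / q - 1 = (p - q) / q by field_simp, hpow hr] at key

lemma abs_rpow_sub_rpow_le {p q r s : ℝ} (hq : 0 < q) (hqp : q ≤ p) (hr : 0 ≤ r) (hs : 0 ≤ s) :
    |r ^ p - s ^ p| ≤ p / q * max r s ^ (p - q) * |r ^ q - s ^ q| := by
  wlog hsr : s ≤ r generalizing r s
  · simpa only [max_comm, abs_sub_comm] using this hs hr (le_of_not_ge hsr)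
  have hmono {e : ℝ} (he : 0 ≤ e) : 0 ≤ r ^ e - s ^ e := sub_nonneg.2 (rpow_le_rpow hs hsr he)
  rw [max_eq_left hsr, abs_of_nonneg (hmono (hq.le.trans hqp)), abs_of_nonneg (hmono hq.le)]
  exact rpow_sub_rpow_le_div_mul_rpow_sub_mul_rpow_sub hq hqp hs hsr

theorem fundamental_ineq_1 (α r s : ℝ) (hα : 1 ≤ α) (hr : 0 ≤ r) (hs : 0 ≤ s) :
    |r ^ α - s ^ α|
      ≤ (2 * α / (α + 1)) * (max r s) ^ ((α - 1) / 2)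
        * |r ^ ((α + 1) / 2) - s ^ ((α + 1) / 2)| := by
  have h := abs_rpow_sub_rpow_le (p := α) (q := (α + 1) / 2) (by linarith) (by linarith) hr hs
  rwa [div_div_eq_mul_div, mul_comm α, show α - (α + 1) / 2 = (α - 1) / 2 by ring] at h
end

section
/- Let α ≥ 1 and set ℓ = (α+1)/2. For all x ≥ 1, the function F(x) = (x^α − 1)(x − 1) − (4α/(α+1)²)(x^((α+1)/2) − 1)² is nonnegative. -/
/-!
For `s > 0` and `x ≥ 1`, `(x ^ s - 1) / s = ∫₁ˣ t ^ (s - 1) dt`. By Cauchy–Schwarz, applied to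
`t ^ ((a - 1) / 2)` and `t ^ ((b - 1) / 2)`, the map `s ↦ (x ^ s - 1) / s` is midpoint
log-convex on `s > 0`. Taking `a = α`, `b = 1` gives the inequality, since
`α / ((α + 1) / 2) ^ 2 = 4α / (α + 1) ^ 2`. The integrals are never formed: the Cauchy–Schwarz
quadratic is checked to be nonnegative by differentiating in `x`.
-/

open Real Set

lemma hasDerivAt_rpow_sub_one_div {s y : ℝ} (hs : s ≠ 0) (hy : 0 < y) :
    HasDerivAt (fun z : ℝ => (z ^ s - 1) / s) (y ^ (s - 1)) y := by
  have := ((hasDerivAt_rpow_const (p := s) (Or.inl hy.ne')).sub_const 1).div_const s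
  rwa [mul_div_cancel_left₀ _ hs] at this

/-- The polynomial in `c` is `∫₁ˣ (c t^((a-1)/2) - t^((b-1)/2))² dt`. -/
lemma quadratic_rpow_sub_one_div_nonneg {a b x : ℝ} (ha : 0 < a) (hb : 0 < b) (hx : 1 ≤ x)
    (c : ℝ) :
    0 ≤ (x ^ a - 1) / a * (c * c) + -2 * ((x ^ ((a + b) / 2) - 1) / ((a + b) / 2)) * c
      + (x ^ b - 1) / b := by
  set h : ℝ → ℝ := fun y => (y ^ a - 1) / a * (c * c)
    + -2 * ((y ^ ((a + b) / 2) - 1) / ((a + b) / 2)) * c + (y ^ b - 1) / b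
  have hderiv : ∀ y ∈ Ioi (0 : ℝ),
      HasDerivAt h ((c * y ^ ((a - 1) / 2) - y ^ ((b - 1) / 2)) ^ 2) y := by
    intro y hy
    have hab : (a + b) / 2 ≠ 0 := by positivity
    refine ((((hasDerivAt_rpow_sub_one_div ha.ne' hy).mul_const (c * c)).add
      (((hasDerivAt_rpow_sub_one_div hab hy).const_mul (-2)).mul_const c)).add
      (hasDerivAt_rpow_sub_one_div hb.ne' hy)).congr_deriv ?_
    have hsq (p : ℝ) : (y ^ (p / 2)) ^ 2 = y ^ p := by
      rw [sq, ← rpow_add hy, add_halves]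
    have hmul : y ^ ((a - 1) / 2) * y ^ ((b - 1) / 2) = y ^ ((a + b) / 2 - 1) := by
      rw [← rpow_add hy]; ring_nf
    linear_combination 2 * c * hmul - c ^ 2 * hsq (a - 1) - hsq (b - 1)
  have hmono : MonotoneOn h (Ioi 0) :=
    monotoneOn_of_hasDerivWithinAt_nonneg (convex_Ioi 0)
      (fun y hy => (hderiv y hy).continuousAt.continuousWithinAt)
      (fun y hy => (hderiv y (interior_subset hy)).hasDerivWithinAt)
      (fun y _ => sq_nonneg _)
  have h1 : h 1 = 0 := by simp [h]
  have := hmono (mem_Ioi.mpr one_pos) (mem_Ioi.mpr (one_pos.trans_le hx)) hx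
  rwa [h1] at this

theorem sq_rpow_sub_one_div_le_mul {a b x : ℝ} (ha : 0 < a) (hb : 0 < b) (hx : 1 ≤ x) :
    ((x ^ ((a + b) / 2) - 1) / ((a + b) / 2)) ^ 2 ≤ (x ^ a - 1) / a * ((x ^ b - 1) / b) := by
  have := discrim_le_zero (quadratic_rpow_sub_one_div_nonneg ha hb hx)
  rw [discrim] at this
  linarith

theorem F_nonneg (α x : ℝ) (hα : 1 ≤ α) (hx : 1 ≤ x) :
    0 ≤ (x ^ α - 1) * (x - 1) - (4 * α / (α + 1) ^ 2) * (x ^ ((α + 1) / 2) - 1) ^ 2 := by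
  have hα0 : 0 < α := by linarith
  have key := sq_rpow_sub_one_div_le_mul hα0 one_pos hx
  rw [rpow_one, div_one] at key
  have hscale : 4 * α / (α + 1) ^ 2 * (x ^ ((α + 1) / 2) - 1) ^ 2
      = α * ((x ^ ((α + 1) / 2) - 1) / ((α + 1) / 2)) ^ 2 := by
    field_simp
    ring
  have hcancel : α * ((x ^ α - 1) / α * (x - 1)) = (x ^ α - 1) * (x - 1) := by
    field_simp
  rw [hscale, ← hcancel, ← mul_sub]
  exact mul_nonneg hα0.le (sub_nonneg.mpr key)
end

section
/- Let α ≥ 1. For all x ≥ 1, the function G(x) = (2α/(α+1))·x^((α−1)/2)·(x^((α+1)/2) − 1) − (x^α − 1) is nonnegative. -/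
/-! Multiplying by `α + 1` and using `x^((α-1)/2) · x^((α+1)/2) = x^α`, the claim becomes
`2α · x^((α-1)/2) ≤ (α-1) · x^α + (α+1)`. Since `x^((α-1)/2) = (x^α)^p` with `p = (α-1)/(2α) ∈ [0, 1]`,
this is Bernoulli's inequality `y^p ≤ 1 + p (y - 1)` at `y = x^α`, multiplied by `2α`. -/

open Real

theorem two_mul_mul_rpow_sub_one_div_two_le {α x : ℝ} (hα : 1 ≤ α) (hx : 0 ≤ x) :
    2 * α * x ^ ((α - 1) / 2) ≤ (α - 1) * x ^ α + (α + 1) := by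
  have hα0 : 0 < α := by linarith
  set p := (α - 1) / (2 * α) with hp
  have hp0 : 0 ≤ p := by positivity
  have hp1 : p ≤ 1 := (div_le_one (by positivity)).2 (by linarith)
  have hpow : (x ^ α) ^ p = x ^ ((α - 1) / 2) := by
    rw [← rpow_mul hx]
    congr 1
    rw [hp]; field_simp
  have bernoulli : (1 + (x ^ α - 1)) ^ p ≤ 1 + p * (x ^ α - 1) :=
    rpow_one_add_le_one_add_mul_self (by linarith [rpow_nonneg hx α]) hp0 hp1
  rw [add_sub_cancel, hpow] at bernoulli
  calc 2 * α * x ^ ((α - 1) / 2) ≤ 2 * α * (1 + p * (x ^ α - 1)) := by gcongr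
    _ = (α - 1) * x ^ α + (α + 1) := by rw [hp]; field_simp; ring

theorem G_nonneg (α x : ℝ) (hα : 1 ≤ α) (hx : 1 ≤ x) :
    0 ≤ (2 * α / (α + 1)) * x ^ ((α - 1) / 2) * (x ^ ((α + 1) / 2) - 1) - (x ^ α - 1) := by
  have hx0 : 0 < x := by linarith
  have hsplit : x ^ ((α - 1) / 2) * x ^ ((α + 1) / 2) = x ^ α := by
    rw [← rpow_add hx0]
    ring_nf
  have key := two_mul_mul_rpow_sub_one_div_two_le hα hx0.le
  calc 0 ≤ ((α - 1) * x ^ α + (α + 1) - 2 * α * x ^ ((α - 1) / 2)) / (α + 1) :=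
        div_nonneg (by linarith) (by linarith)
    _ = _ := by
      field_simp
      rw [← hsplit]
      ring
end

section
/- Let α ≥ 1 and ℓ = (α+1)/2. For all x ≥ 1, one has ((ℓ−1)/ℓ)·(x^ℓ − 1) ≥ x^(1/2)·(x^(ℓ−1) − 1). -/
/-!
Put `x = t ^ 2`: since `α = 2ℓ - 1`, the inequality becomes
`(α + 1) (t ^ α - t) ≤ (α - 1) (t ^ (α + 1) - 1)` for `t ≥ 1`. Both sides vanish at `t = 1`,
and the derivative of their difference is `(α + 1) ((α - 1) t ^ α - α t ^ (α - 1) + 1)`,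
which is nonnegative by the weighted AM-GM inequality `t ^ (α - 1) ≤ (1 - 1/α) t ^ α + 1/α`.
-/

open Set

namespace Real

theorem mul_rpow_sub_one_le {p t : ℝ} (hp : 1 ≤ p) (ht : 0 ≤ t) :
    p * t ^ (p - 1) ≤ (p - 1) * t ^ p + 1 := by
  have hp0 : 0 < p := by linarith
  have amgm := geom_mean_le_arith_mean2_weighted (p₁ := t ^ p) (p₂ := 1)
    (div_nonneg (sub_nonneg.2 hp) hp0.le) (one_div_nonneg.2 hp0.le) (rpow_nonneg ht p)
    zero_le_one (by field_simp; ring)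
  rw [one_rpow, mul_one, ← rpow_mul ht, mul_div_cancel₀ _ hp0.ne'] at amgm
  calc p * t ^ (p - 1) ≤ p * ((p - 1) / p * t ^ p + 1 / p * 1) := by gcongr
    _ = (p - 1) * t ^ p + 1 := by field_simp

theorem add_one_mul_rpow_sub_self_le {p t : ℝ} (hp : 1 ≤ p) (ht : 1 ≤ t) :
    (p + 1) * (t ^ p - t) ≤ (p - 1) * (t ^ (p + 1) - 1) := by
  set g : ℝ → ℝ := fun s => (p - 1) * (s ^ (p + 1) - 1) - (p + 1) * (s ^ p - s)
  set g' : ℝ → ℝ := fun s => (p + 1) * ((p - 1) * s ^ p - p * s ^ (p - 1) + 1)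
  have hg : ∀ s, 0 < s → HasDerivAt g (g' s) s := fun s hs => by
    have h := (((hasDerivAt_rpow_const (p := p + 1) (Or.inl hs.ne')).sub_const 1).const_mul
      (p - 1)).sub
      (((hasDerivAt_rpow_const (p := p) (Or.inl hs.ne')).sub (hasDerivAt_id s)).const_mul (p + 1))
    exact h.congr_deriv (by simp only [g', add_sub_cancel_right]; ring)
  have hmono : MonotoneOn g (Ici 1) := by
    refine monotoneOn_of_hasDerivWithinAt_nonneg (f' := g') (convex_Ici 1)
      (fun s hs => (hg s (by linarith [mem_Ici.1 hs])).continuousAt.continuousWithinAt)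
      (fun s hs => ?_) (fun s hs => ?_) <;> rw [interior_Ici] at hs
    · exact (hg s (by linarith [mem_Ioi.1 hs])).hasDerivWithinAt
    · have h := mul_rpow_sub_one_le hp (by linarith [mem_Ioi.1 hs] : 0 ≤ s)
      exact mul_nonneg (by linarith) (by linarith)
  have := hmono self_mem_Ici ht ht
  simp only [g, one_rpow] at this
  linarith

end Real

theorem F1_nonneg (α x : ℝ) (hα : 1 ≤ α) (hx : 1 ≤ x) (ℓ : ℝ) (hℓ : ℓ = (α + 1) / 2) :
    x ^ ((1 : ℝ) / 2) * (x ^ (ℓ - 1) - 1) ≤ ((ℓ - 1) / ℓ) * (x ^ ℓ - 1) := by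
  subst hℓ
  have hx0 : 0 ≤ x := by linarith
  set t := x ^ ((1 : ℝ) / 2)
  have ht : 1 ≤ t := Real.one_le_rpow hx (by norm_num)
  have hxα : x ^ ((α + 1) / 2) = t ^ (α + 1) := by
    rw [← Real.rpow_mul hx0]; ring_nf
  have htα : t * x ^ ((α + 1) / 2 - 1) = t ^ α := by
    rw [← Real.rpow_mul hx0, ← Real.rpow_add (by linarith)]; ring_nf
  have key := Real.add_one_mul_rpow_sub_self_le hα ht
  rw [mul_sub, htα, mul_one, hxα, div_mul_eq_mul_div, le_div_iff₀ (by linarith)]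
  linarith
end

section
/- Let α ≥ 1 and let v, w : Ω → [0,∞) be measurable on a finite measure space (Ω, μ). Then ∫ |v − w|² dμ ≤ μ(Ω)^((α−1)/(α+1)) · (∫ |v^((α+1)/2) − w^((α+1)/2)|² dμ)^(2/(α+1)). -/
/-!
Since `t ↦ t ^ β` is superadditive on `[0, ∞)` for `β = (α + 1) / 2 ≥ 1`, one has
`|r - s| ^ β ≤ |r ^ β - s ^ β|` for `r, s ≥ 0`, hence `(|v - w| ^ 2) ^ β ≤ |v ^ β - w ^ β| ^ 2`
pointwise. The theorem is then the comparison `‖f‖₁ ≤ μ(Ω) ^ (1 - 1/β) ‖f‖_β` of `L¹` and `L^β`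
norms on a finite measure space (Hölder against the constant `1`), applied to `f = |v - w| ^ 2`.
-/

open MeasureTheory

lemma Real.abs_sub_rpow_le_abs_rpow_sub {r s p : ℝ} (hr : 0 ≤ r) (hs : 0 ≤ s) (hp : 1 ≤ p) :
    |r - s| ^ p ≤ |r ^ p - s ^ p| := by
  wlog hsr : s ≤ r generalizing r s
  · rw [abs_sub_comm, abs_sub_comm (r ^ p)]
    exact this hs hr (le_of_not_ge hsr)
  have h_mono : s ^ p ≤ r ^ p := Real.rpow_le_rpow hs hsr (by linarith)
  have h_super := Real.add_rpow_le_rpow_add (sub_nonneg.2 hsr) hs hp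
  rw [sub_add_cancel] at h_super
  rw [abs_of_nonneg (sub_nonneg.2 hsr), abs_of_nonneg (sub_nonneg.2 h_mono)]
  linarith

section

variable {Ω : Type*} [MeasurableSpace Ω] {μ : Measure Ω} {f : Ω → ℝ} {p : ℝ}

lemma memLp_ofReal_of_integrable_rpow (hp : 0 < p) (hf0 : 0 ≤ᵐ[μ] f)
    (hfp : Integrable (fun x => f x ^ p) μ) : MemLp f (ENNReal.ofReal p) μ := by
  have hf_eq : (fun x => (f x ^ p) ^ (1 / p)) =ᵐ[μ] f := hf0.mono fun x hx => by
    simp only [← Real.rpow_mul hx, mul_one_div_cancel hp.ne', Real.rpow_one]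
  have hf_meas : AEStronglyMeasurable f μ :=
    ((Real.continuous_rpow_const (one_div_nonneg.2 hp.le)).comp_aestronglyMeasurable
      hfp.aestronglyMeasurable).congr hf_eq
  have hp_ne : ENNReal.ofReal p ≠ 0 := by simpa using hp
  rw [← memLp_norm_rpow_iff hf_meas hp_ne ENNReal.ofReal_ne_top,
    ENNReal.div_self hp_ne ENNReal.ofReal_ne_top, memLp_one_iff_integrable,
    ENNReal.toReal_ofReal hp.le]
  exact hfp.congr (hf0.mono fun x hx => by simp only [Real.norm_of_nonneg hx])

lemma integral_le_measureReal_univ_rpow_mul_integral_rpow [IsFiniteMeasure μ] (hp : 1 ≤ p)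
    (hf0 : 0 ≤ᵐ[μ] f) (hfp : Integrable (fun x => f x ^ p) μ) :
    ∫ x, f x ∂μ ≤ μ.real Set.univ ^ (1 - 1 / p) * (∫ x, f x ^ p ∂μ) ^ (1 / p) := by
  have hp0 : 0 < p := by linarith
  have hp_ne : ENNReal.ofReal p ≠ 0 := by simpa using hp0
  have hpq : (1 : ENNReal) ≤ ENNReal.ofReal p := by simpa using hp
  have hmem := memLp_ofReal_of_integrable_rpow hp0 hf0 hfp
  have key := eLpNorm_le_eLpNorm_mul_rpow_measure_univ hpq hmem.1
  rw [(hmem.mono_exponent hpq).eLpNorm_eq_integral_rpow_norm one_ne_zero ENNReal.one_ne_top,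
    hmem.eLpNorm_eq_integral_rpow_norm hp_ne ENNReal.ofReal_ne_top, ← ofReal_measureReal,
    ENNReal.ofReal_rpow_of_nonneg measureReal_nonneg (by
      simpa [ENNReal.toReal_ofReal hp0.le] using inv_le_one_of_one_le₀ hp),
    ← ENNReal.ofReal_mul (by positivity), ENNReal.ofReal_le_ofReal_iff (by positivity)] at key
  simp only [ENNReal.toReal_one, ENNReal.toReal_ofReal hp0.le, Real.rpow_one, inv_one] at key
  have h_norm : ∫ x, ‖f x‖ ∂μ = ∫ x, f x ∂μ :=
    integral_congr_ae (hf0.mono fun x hx => Real.norm_of_nonneg hx)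
  have h_norm_rpow : ∫ x, ‖f x‖ ^ p ∂μ = ∫ x, f x ^ p ∂μ :=
    integral_congr_ae (hf0.mono fun x hx => by simp only [Real.norm_of_nonneg hx])
  rwa [h_norm, h_norm_rpow, one_div_one, mul_comm, ← one_div] at key

end

theorem holder_in_time_general {Ω : Type*} [MeasurableSpace Ω] (μ : Measure Ω)
    [IsFiniteMeasure μ] (α : ℝ) (hα : 1 ≤ α) (v w : Ω → ℝ)
    (hv0 : ∀ x, 0 ≤ v x) (hw0 : ∀ x, 0 ≤ w x)
    (h1 : Integrable (fun x => |v x - w x| ^ 2) μ)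
    (h2 : Integrable (fun x => |v x ^ ((α + 1) / 2) - w x ^ ((α + 1) / 2)| ^ 2) μ) :
    ∫ x, |v x - w x| ^ 2 ∂μ
      ≤ (μ Set.univ).toReal ^ ((α - 1) / (α + 1))
        * (∫ x, |v x ^ ((α + 1) / 2) - w x ^ ((α + 1) / 2)| ^ 2 ∂μ) ^ ((2 : ℝ) / (α + 1)) := by
  set β := (α + 1) / 2 with hβ_def
  have hβ : 1 ≤ β := by linarith
  have h_exp₁ : (α - 1) / (α + 1) = 1 - 1 / β := by field_simp; ring
  have h_exp₂ : (2 : ℝ) / (α + 1) = 1 / β := by field_simp; linarith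
  have h_pt (x : Ω) : (|v x - w x| ^ 2) ^ β ≤ |v x ^ β - w x ^ β| ^ 2 := by
    rw [← Real.rpow_natCast, ← Real.rpow_mul (abs_nonneg _), mul_comm,
      Real.rpow_mul (abs_nonneg _), Real.rpow_natCast]
    exact pow_le_pow_left₀ (by positivity) (Real.abs_sub_rpow_le_abs_rpow_sub (hv0 x) (hw0 x) hβ) 2
  have h_int : Integrable (fun x => (|v x - w x| ^ 2) ^ β) μ :=
    h2.mono' ((Real.continuous_rpow_const (by linarith)).comp_aestronglyMeasurable
      h1.aestronglyMeasurable) (.of_forall fun x => by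
        rw [Real.norm_of_nonneg (by positivity)]; exact h_pt x)
  rw [h_exp₁, h_exp₂, ← measureReal_def]
  calc ∫ x, |v x - w x| ^ 2 ∂μ
      ≤ μ.real Set.univ ^ (1 - 1 / β) * (∫ x, (|v x - w x| ^ 2) ^ β ∂μ) ^ (1 / β) :=
        integral_le_measureReal_univ_rpow_mul_integral_rpow hβ (.of_forall fun _ => by positivity)
          h_int
    _ ≤ μ.real Set.univ ^ (1 - 1 / β) * (∫ x, |v x ^ β - w x ^ β| ^ 2 ∂μ) ^ (1 / β) := by
        gcongr
        exact h_pt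

theorem holder_in_time {Ω : Type*} [MeasurableSpace Ω] (μ : Measure Ω)
    [IsFiniteMeasure μ] (α : ℝ) (hα : 1 ≤ α) (v w : Ω → ℝ)
    (hv : Measurable v) (hw : Measurable w)
    (hv0 : ∀ x, 0 ≤ v x) (hw0 : ∀ x, 0 ≤ w x)
    (h1 : Integrable (fun x => |v x - w x| ^ 2) μ)
    (h2 : Integrable (fun x => |v x ^ ((α + 1) / 2) - w x ^ ((α + 1) / 2)| ^ 2) μ) :
    ∫ x, |v x - w x| ^ 2 ∂μ
      ≤ (μ Set.univ).toReal ^ ((α - 1) / (α + 1))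
        * (∫ x, |v x ^ ((α + 1) / 2) - w x ^ ((α + 1) / 2)| ^ 2 ∂μ) ^ ((2 : ℝ) / (α + 1)) :=
  holder_in_time_general μ α hα v w hv0 hw0 h1 h2
end
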